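/- Let n ≥ 3 be odd. Then the preimage under the quotient map Λ → Λ/ℤS^+ of the torsion subgroup of Λ/ℤS^+ is equal to ⟨σ_2, σ_3, …, σ_{n−1}, ω_{n−1}⟩_ℤ. -/

import Mathlib

/-- The fundamental weights `ω_1, …, ω_n` of `SL(n+1)` in the weight lattice
`Λ = ℤⁿ`: `ω_j` is the `j`-th standard basis vector for `1 ≤ j ≤ n`, and by
convention `ω_0 = ω_{n+1} = 0`. -/
def w (n : ℕ) (j : ℕ) : Fin n → ℤ := fun i => if (i : ℕ) + 1 = j then 1 else 0

/-- The simple roots of `SL(n+1)`: `α_i = 2ω_i − ω_{i−1} − ω_{i+1}` for `1 ≤ i ≤ n`. -/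
def sroot (n : ℕ) (i : ℕ) : Fin n → ℤ := 2 • w n i - w n (i - 1) - w n (i + 1)

/-- `σ_i = α_i + α_{i+1}` for `1 ≤ i ≤ n−1`. -/
def sig (n : ℕ) (i : ℕ) : Fin n → ℤ := sroot n i + sroot n (i + 1)

/-- `ℤS⁺`, the subgroup of `Λ` generated by `σ_1, …, σ_{n−1}`. -/
def ZSplus (n : ℕ) : Submodule ℤ (Fin n → ℤ) :=
  Submodule.span ℤ (sig n '' Set.Icc 1 (n - 1))

/-!
The linear form `f` summing the coefficients of the odd weights `ω_j` kills every `σ_i` and, as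
`n` is odd, also `ω_{n-1}`, while `f ω_n = 1`. Since `ℤ` is torsion-free, the preimage of the
torsion lies in `ker f`. Conversely `ω_j = ω_{j+1} + ω_{j+2} - ω_{j+3} - σ_{j+1}` shows that
`σ_2, …, σ_{n-1}, ω_{n-1}, ω_n` span `Λ`, so the first `n - 1` of them span `ker f`. Finally
`ω_{n-1}` is torsion: for `n = 2m + 1`, `∑_{k<m} (k+1) (σ_{2k+1} + σ_{2k+2}) = (m+1) ω_{n-1}`.
-/

section TorsionFreeTarget

variable {R M M' : Type*} [CommRing R] [AddCommGroup M] [Module R M]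
  [AddCommGroup M'] [Module R M'] {f : M →ₗ[R] M'}

theorem Submodule.comap_mkQ_torsion_le_ker [Module.IsTorsionFree R M'] {N : Submodule R M}
    (hN : N ≤ LinearMap.ker f) : (torsion R (M ⧸ N)).comap N.mkQ ≤ LinearMap.ker f := by
  intro x hx
  obtain ⟨a, ha⟩ := (mem_torsion_iff _).1 hx
  have hax : (a : R) • x ∈ N := by
    rwa [← Quotient.mk_eq_zero, Quotient.mk_smul]
  have hfax : (a : R) • f x = 0 := by
    rw [← map_smul]
    exact hN hax
  exact (isRegular_iff_mem_nonZeroDivisors.2 a.2).smul_eq_zero_iff_right.1 hfax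

theorem LinearMap.ker_le_of_sup_span_singleton_eq_top [IsDomain R] [Module.IsTorsionFree R M']
    {S : Submodule R M} {v : M} (htop : S ⊔ Submodule.span R {v} = ⊤) (hS : S ≤ ker f)
    (hv : f v ≠ 0) : ker f ≤ S := by
  intro x hx
  obtain ⟨s, hs, y, hy, rfl⟩ := Submodule.mem_sup.1 (htop ▸ Submodule.mem_top (x := x))
  obtain ⟨c, rfl⟩ := Submodule.mem_span_singleton.1 hy
  have hc : c • f v = 0 := by
    rwa [mem_ker, map_add, hS hs, zero_add, map_smul] at hx
  rw [(smul_eq_zero_iff_left hv).1 hc, zero_smul, add_zero]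
  exact hs

end TorsionFreeTarget

lemma w_eq_zero {n j : ℕ} (h : j = 0 ∨ n < j) : w n j = 0 := by
  funext i
  simp only [w, Pi.zero_apply, ite_eq_right_iff]
  omega

lemma w_succ {n : ℕ} (i : Fin n) : w n (i + 1) = Pi.single i 1 := by
  funext k
  simp only [w, Pi.single_apply, Nat.add_right_cancel_iff, Fin.val_inj]

lemma sig_eq (n i : ℕ) : sig n i = w n i + w n (i + 1) - w n (i - 1) - w n (i + 2) := by
  simp only [sig, sroot, Nat.add_sub_cancel]
  abel

/-- The sum of the coefficients of `ω_j` over odd `j`; the coordinate `i : Fin n` carries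
`ω_{i+1}`. -/
def oddCoeffSum (n : ℕ) : (Fin n → ℤ) →ₗ[ℤ] ℤ :=
  ∑ i ∈ Finset.univ.filter (fun i : Fin n => Even (i : ℕ)), LinearMap.proj i

lemma oddCoeffSum_w (n j : ℕ) : oddCoeffSum n (w n j) = if Odd j ∧ j ≤ n then 1 else 0 := by
  rcases Nat.eq_zero_or_pos j with rfl | hj
  · simp [w_eq_zero]
  by_cases hjn : j ≤ n
  · obtain ⟨i, rfl⟩ : ∃ i : Fin n, j = i + 1 := ⟨⟨j - 1, by omega⟩, by simp; omega⟩
    simp [oddCoeffSum, w_succ, Finset.sum_pi_single', Nat.odd_add_one, hjn]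
  · simp [w_eq_zero (Or.inr (not_le.1 hjn)), hjn]

lemma oddCoeffSum_sig {n i : ℕ} (hno : Odd n) (hi : i ∈ Set.Icc 1 (n - 1)) :
    oddCoeffSum n (sig n i) = 0 := by
  obtain ⟨m, rfl⟩ := hno
  simp only [Set.mem_Icc] at hi
  simp only [sig_eq, map_sub, map_add, oddCoeffSum_w, Nat.odd_iff]
  split_ifs <;> omega

lemma ZSplus_le_ker_oddCoeffSum {n : ℕ} (hno : Odd n) :
    ZSplus n ≤ LinearMap.ker (oddCoeffSum n) :=
  Submodule.span_le.2 <| Set.image_subset_iff.2 fun _ hi => oddCoeffSum_sig hno hi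

lemma sig_mem_ZSplus {n i : ℕ} (hi : i ∈ Set.Icc 1 (n - 1)) : sig n i ∈ ZSplus n :=
  Submodule.subset_span ⟨i, hi, rfl⟩

lemma w_eq_sub_sig (n j : ℕ) :
    w n j = w n (j + 1) + w n (j + 2) - w n (j + 3) - sig n (j + 1) := by
  rw [sig_eq, Nat.add_sub_cancel]
  abel

lemma w_mem_of_sig_mem {n : ℕ} {T : Submodule ℤ (Fin n → ℤ)}
    (hsig : ∀ i ∈ Set.Icc 2 (n - 1), sig n i ∈ T) (hpred : w n (n - 1) ∈ T) (hlast : w n n ∈ T)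
    (j : ℕ) : w n j ∈ T := by
  obtain h | h | rfl | rfl | ⟨h1, h2⟩ :
      j = 0 ∨ n < j ∨ j = n ∨ j = n - 1 ∨ 1 ≤ j ∧ j + 2 ≤ n := by omega
  · exact w_eq_zero (.inl h) ▸ zero_mem T
  · exact w_eq_zero (.inr h) ▸ zero_mem T
  · exact hlast
  · exact hpred
  · rw [w_eq_sub_sig]
    refine sub_mem (sub_mem (add_mem ?_ ?_) ?_) (hsig _ ⟨by omega, by omega⟩) <;>
      exact w_mem_of_sig_mem hsig hpred hlast _
termination_by n - j

lemma span_sig_w_sup_span_w_eq_top {n : ℕ} :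
    Submodule.span ℤ (sig n '' Set.Icc 2 (n - 1) ∪ {w n (n - 1)}) ⊔ Submodule.span ℤ {w n n}
      = ⊤ := by
  rw [eq_top_iff, ← (Pi.basisFun ℤ (Fin n)).span_eq, Submodule.span_le]
  rintro _ ⟨i, rfl⟩
  rw [Pi.basisFun_apply, ← w_succ]
  refine w_mem_of_sig_mem (fun i hi => ?_) ?_
    (Submodule.mem_sup_right (Submodule.mem_span_singleton_self _)) _
  · exact Submodule.mem_sup_left (Submodule.subset_span (.inl ⟨i, hi, rfl⟩))
  · exact Submodule.mem_sup_left (Submodule.subset_span (.inr rfl))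

lemma smul_w_sub_smul_w_mem_ZSplus {n : ℕ} (k : ℕ) (hk : 2 * k + 1 ≤ n) :
    ((k : ℤ) + 1) • w n (2 * k) - (k : ℤ) • w n (2 * k + 2) ∈ ZSplus n := by
  induction k with
  | zero => simp [w_eq_zero]
  | succ k ih =>
    -- a second difference of the even weights, so the weighted sum telescopes
    have hτ : sig n (2 * k + 1) + sig n (2 * k + 2)
        = 2 • w n (2 * k + 2) - w n (2 * k) - w n (2 * k + 4) := by
      rw [sig_eq, sig_eq]
      simp only [Nat.add_sub_cancel, show 2 * k + 2 - 1 = 2 * k + 1 by omega]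
      abel
    have e : ((↑(k + 1) : ℤ) + 1) • w n (2 * (k + 1)) - (↑(k + 1) : ℤ) • w n (2 * (k + 1) + 2)
        = (((k : ℤ) + 1) • w n (2 * k) - (k : ℤ) • w n (2 * k + 2))
          + ((k : ℤ) + 1) • (sig n (2 * k + 1) + sig n (2 * k + 2)) := by
      rw [hτ, show 2 * (k + 1) + 2 = 2 * k + 4 by ring, show 2 * (k + 1) = 2 * k + 2 by ring]
      push_cast
      module
    rw [e]
    exact add_mem (ih (by omega)) (Submodule.smul_mem _ _
      (add_mem (sig_mem_ZSplus ⟨by omega, by omega⟩) (sig_mem_ZSplus ⟨by omega, by omega⟩)))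

lemma mkQ_w_pred_mem_torsion {n : ℕ} (hno : Odd n) :
    (ZSplus n).mkQ (w n (n - 1)) ∈ Submodule.torsion ℤ ((Fin n → ℤ) ⧸ ZSplus n) := by
  obtain ⟨m, rfl⟩ := hno
  have h := smul_w_sub_smul_w_mem_ZSplus (n := 2 * m + 1) m le_rfl
  rw [w_eq_zero (j := 2 * m + 2) (.inr (by omega)), smul_zero, sub_zero] at h
  refine (Submodule.mem_torsion_iff _).2
    ⟨⟨(m : ℤ) + 1, mem_nonZeroDivisors_of_ne_zero (by omega)⟩, ?_⟩
  rw [Submonoid.mk_smul, ← map_smul, Submodule.mkQ_apply, Submodule.Quotient.mk_eq_zero]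
  simpa using h

lemma span_sig_w_le_ker_oddCoeffSum {n : ℕ} (hno : Odd n) :
    Submodule.span ℤ (sig n '' Set.Icc 2 (n - 1) ∪ {w n (n - 1)})
      ≤ LinearMap.ker (oddCoeffSum n) := by
  rw [Submodule.span_le]
  rintro _ (⟨i, hi, rfl⟩ | rfl)
  · exact oddCoeffSum_sig hno (Set.Icc_subset_Icc_left one_le_two hi)
  · simp [oddCoeffSum_w, Nat.Odd.sub_odd hno odd_one]

theorem stmt12_general (n : ℕ) (hno : Odd n) :
    (Submodule.torsion ℤ ((Fin n → ℤ) ⧸ ZSplus n)).comap (ZSplus n).mkQ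
      = Submodule.span ℤ (sig n '' Set.Icc 2 (n - 1) ∪ {w n (n - 1)}) := by
  refine le_antisymm ?_ ?_
  · have hodd : oddCoeffSum n (w n n) ≠ 0 := by simp [oddCoeffSum_w, hno]
    exact (Submodule.comap_mkQ_torsion_le_ker (ZSplus_le_ker_oddCoeffSum hno)).trans
      (LinearMap.ker_le_of_sup_span_singleton_eq_top span_sig_w_sup_span_w_eq_top
        (span_sig_w_le_ker_oddCoeffSum hno) hodd)
  · rw [Submodule.span_le]
    rintro _ (⟨i, hi, rfl⟩ | rfl)
    · have hσ := sig_mem_ZSplus (Set.Icc_subset_Icc_left one_le_two hi)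
      rw [SetLike.mem_coe, Submodule.mem_comap, Submodule.mkQ_apply,
        (Submodule.Quotient.mk_eq_zero _).2 hσ]
      exact zero_mem _
    · exact mkQ_w_pred_mem_torsion hno

/-- For `n ≥ 3` odd, the preimage under the quotient map `Λ → Λ/ℤS⁺` of the torsion
subgroup of `Λ/ℤS⁺` equals `⟨σ_2, σ_3, …, σ_{n−1}, ω_{n−1}⟩_ℤ`. -/
theorem stmt12 (n : ℕ) (hn : 3 ≤ n) (hno : Odd n) :
    (Submodule.torsion ℤ ((Fin n → ℤ) ⧸ ZSplus n)).comap (ZSplus n).mkQ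
      = Submodule.span ℤ (sig n '' Set.Icc 2 (n - 1) ∪ {w n (n - 1)}) :=
  stmt12_general n hno
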